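/- Assume the Euclidean QST holds in ℝ^d with constant r ∈ (0,1]. Let C be a subset of the open northern hemisphere of S^d whose spherical convex hull contains the cap C(e_{d+1}, ρ) for some ρ ∈ (0, π/2). Then there exists a subset C' of C of at most 2d points whose spherical convex hull contains the cap C(e_{d+1}, (r/2)·ρ). -/

import Mathlib

open Real Set
open scoped RealInnerProductSpace

noncomputable section

/-- Euclidean space `ℝ^n`. -/
abbrev E (n : ℕ) := EuclideanSpace ℝ (Fin n)

/-- The unit sphere `S^{n-1} ⊆ ℝ^n`. -/
def unitSphere (n : ℕ) : Set (E n) := Metric.sphere 0 1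

/-- The spherical cap with center `v` and spherical radius `ρ`. -/
def cap {n : ℕ} (v : E n) (ρ : ℝ) : Set (E n) := {u ∈ unitSphere n | Real.cos ρ ≤ ⟪u, v⟫}

/-- The last standard basis vector `e_{d+1}` of `ℝ^{d+1}`. -/
def eLast (d : ℕ) : E (d + 1) := EuclideanSpace.single (Fin.last d) 1

/-- Central projection from the origin onto the hyperplane `{x : x_{d+1} = 1}`,
identified with `ℝ^d` (with origin `e_{d+1}`). -/
def PN {d : ℕ} (x : E (d + 1)) : E d := WithLp.toLp 2 (fun i : Fin d => x i.castSucc / x (Fin.last d))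

/-- Points of the shorter great-circle arc between unit vectors `u` and `v`
(for `u`, `v` in an open hemisphere): normalized nonnegative combinations. -/
def arcPts {n : ℕ} (u v : E n) : Set (E n) :=
  {w | ∃ a b : ℝ, 0 ≤ a ∧ 0 ≤ b ∧ a • u + b • v ≠ 0 ∧ w = ‖a • u + b • v‖⁻¹ • (a • u + b • v)}

/-- A set `K ⊆ S^{n-1}` is spherically convex if it is the whole sphere, or it is
contained in an open hemisphere and contains the shorter arc between any two of its points. -/
def IsSphConvex {n : ℕ} (K : Set (E n)) : Prop :=
  K = unitSphere n ∨
    ((∃ v : E n, ∀ x ∈ K, 0 < ⟪x, v⟫) ∧ ∀ u ∈ K, ∀ w ∈ K, arcPts u w ⊆ K)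

/-- The spherical convex hull: the intersection of all spherically convex subsets
of the sphere containing `C`. -/
def sconv {n : ℕ} (C : Set (E n)) : Set (E n) :=
  ⋂₀ {K | IsSphConvex K ∧ K ⊆ unitSphere n ∧ C ⊆ K}

/-- The polar of a set `S ⊆ ℝ^n`. -/
def polar {n : ℕ} (S : Set (E n)) : Set (E n) := {x | ∀ s ∈ S, ⟪x, s⟫ ≤ 1}

end

/-!
Central projection `PN` from the origin identifies the open northern hemisphere with `ℝ^d` and
maps great-circle arcs onto segments. Hence, for `C` in that hemisphere, `sconv C` is the
`PN`-preimage of `conv (PN C)`, and the cap `C(e_{d+1}, θ)` is the preimage of the ball of radius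
`tan θ`. Euclidean QST, rescaled to the ball of radius `tan ρ`, picks `2d` points of `PN C` whose
hull contains the ball of radius `r tan ρ`, and `tan (rρ/2) ≤ rρ ≤ r tan ρ`.
-/

section Gnomonic

variable {d : ℕ}

@[simp] lemma mem_unitSphere {n : ℕ} {x : E n} : x ∈ unitSphere n ↔ ‖x‖ = 1 := by
  simp [unitSphere]

def northHemisphere (d : ℕ) : Set (E (d + 1)) := {x ∈ unitSphere (d + 1) | 0 < x (Fin.last d)}

def homogenize (y : E d) : E (d + 1) := WithLp.toLp 2 (Fin.snoc (fun j => y j) 1)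

noncomputable def PNinv (y : E d) : E (d + 1) := ‖homogenize y‖⁻¹ • homogenize y

@[simp] lemma homogenize_castSucc (y : E d) (j : Fin d) : homogenize y j.castSucc = y j := by
  simp [homogenize]

@[simp] lemma homogenize_last (y : E d) : homogenize y (Fin.last d) = 1 := by
  simp [homogenize]

lemma homogenize_ne_zero (y : E d) : homogenize y ≠ 0 := fun h => by
  simpa [h] using homogenize_last y

lemma homogenize_add_smul {a b : ℝ} (hab : a + b = 1) (y z : E d) :
    homogenize (a • y + b • z) = a • homogenize y + b • homogenize z := by
  ext i
  induction i using Fin.lastCases with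
  | last => simp [hab]
  | cast j => simp

lemma PN_homogenize (y : E d) : PN (homogenize y) = y := by
  ext j
  simp [PN]

lemma homogenize_PN {x : E (d + 1)} (hx : x (Fin.last d) ≠ 0) :
    homogenize (PN x) = (x (Fin.last d))⁻¹ • x := by
  ext i
  induction i using Fin.lastCases with
  | last => simp [hx]
  | cast j => simp [PN, div_eq_inv_mul]

lemma PN_smul {c : ℝ} (hc : c ≠ 0) (x : E (d + 1)) : PN (c • x) = PN x := by
  ext j
  simp [PN, mul_div_mul_left _ _ hc]

lemma PN_smul_add_smul {u w : E (d + 1)} (hu : u (Fin.last d) ≠ 0) (hw : w (Fin.last d) ≠ 0)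
    (a b : ℝ) (hc : a * u (Fin.last d) + b * w (Fin.last d) ≠ 0) :
    PN (a • u + b • w) =
      (a * u (Fin.last d) / (a * u (Fin.last d) + b * w (Fin.last d))) • PN u +
      (b * w (Fin.last d) / (a * u (Fin.last d) + b * w (Fin.last d))) • PN w := by
  ext j
  simp only [PN, PiLp.add_apply, PiLp.smul_apply, smul_eq_mul]
  field_simp

lemma PN_PNinv (y : E d) : PN (PNinv y) = y := by
  rw [PNinv, PN_smul (inv_ne_zero (norm_ne_zero_iff.2 (homogenize_ne_zero y))), PN_homogenize]

lemma PNinv_mem_northHemisphere (y : E d) : PNinv y ∈ northHemisphere d := by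
  have hpos : 0 < ‖homogenize y‖ := norm_pos_iff.2 (homogenize_ne_zero y)
  refine ⟨?_, ?_⟩
  · simp [PNinv, norm_smul, hpos.ne']
  · simp [PNinv, hpos]

lemma PNinv_PN {x : E (d + 1)} (hx : x ∈ northHemisphere d) : PNinv (PN x) = x := by
  obtain ⟨hx1, hxl⟩ := hx
  rw [mem_unitSphere] at hx1
  rw [PNinv, homogenize_PN hxl.ne', norm_smul, norm_inv, Real.norm_of_nonneg hxl.le, hx1,
    mul_one, inv_inv, smul_smul, mul_inv_cancel₀ hxl.ne', one_smul]

lemma one_add_norm_PN_sq {x : E (d + 1)} (hx : ‖x‖ = 1) (hxl : x (Fin.last d) ≠ 0) :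
    1 + ‖PN x‖ ^ 2 = (x (Fin.last d) ^ 2)⁻¹ := by
  have hsum := EuclideanSpace.real_norm_sq_eq x
  rw [hx, Fin.sum_univ_castSucc] at hsum
  rw [EuclideanSpace.real_norm_sq_eq]
  simp only [PN, PiLp.toLp_apply, div_pow, ← Finset.sum_div]
  field_simp
  linarith

lemma inner_eLast (u : E (d + 1)) : ⟪u, eLast d⟫ = u (Fin.last d) := by
  simp [eLast, EuclideanSpace.inner_single_right]

lemma mem_cap_eLast_iff {θ : ℝ} (hθ0 : 0 ≤ θ) (hθ : θ < π / 2) {u : E (d + 1)} :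
    u ∈ cap (eLast d) θ ↔ u ∈ northHemisphere d ∧ ‖PN u‖ ≤ tan θ := by
  have hcos : 0 < cos θ := cos_pos_of_mem_Ioo ⟨by linarith [pi_pos], hθ⟩
  have htan : 0 ≤ tan θ := tan_nonneg_of_nonneg_of_le_pi_div_two hθ0 hθ.le
  have key (hu : ‖u‖ = 1) (hl : 0 < u (Fin.last d)) : ‖PN u‖ ≤ tan θ ↔ cos θ ≤ u (Fin.last d) := by
    rw [← pow_le_pow_iff_left₀ (norm_nonneg _) htan two_ne_zero, ← add_le_add_iff_left 1,
      one_add_norm_PN_sq hu hl.ne', ← inv_inv (1 + tan θ ^ 2), inv_one_add_tan_sq hcos.ne',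
      inv_le_inv₀ (by positivity) (by positivity), pow_le_pow_iff_left₀ hcos.le hl.le two_ne_zero]
  simp only [cap, northHemisphere, inner_eLast, mem_ofPred_eq, mem_unitSphere]
  constructor
  · rintro ⟨hu, hle⟩
    have hl := hcos.trans_le hle
    exact ⟨⟨hu, hl⟩, (key hu hl).2 hle⟩
  · rintro ⟨⟨hu, hl⟩, hle⟩
    exact ⟨hu, (key hu hl).1 hle⟩

end Gnomonic

section SphericalHull

variable {d : ℕ}

lemma isSphConvex_setOf_PN_mem {s : Set (E d)} (hs : Convex ℝ s) :
    IsSphConvex {x ∈ northHemisphere d | PN x ∈ s} := by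
  refine Or.inr ⟨⟨eLast d, fun x hx => by rw [inner_eLast]; exact hx.1.2⟩, ?_⟩
  rintro u ⟨⟨-, hul⟩, hus⟩ w ⟨⟨-, hwl⟩, hws⟩ _ ⟨a, b, ha, hb, hz, rfl⟩
  have hab : 0 < a ∨ 0 < b := by
    by_contra! h
    exact hz (by simp [le_antisymm h.1 ha, le_antisymm h.2 hb])
  have hc : 0 < a * u (Fin.last d) + b * w (Fin.last d) := by
    rcases hab with h | h <;> positivity
  have hn : 0 < ‖a • u + b • w‖ := norm_pos_iff.2 hz
  refine ⟨⟨?_, ?_⟩, ?_⟩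
  · rw [mem_unitSphere, norm_smul, norm_inv, norm_norm, inv_mul_cancel₀ hn.ne']
  · rw [PiLp.smul_apply, smul_eq_mul]
    exact mul_pos (inv_pos.2 hn) (by simpa using hc)
  · rw [PN_smul (inv_ne_zero hn.ne'), PN_smul_add_smul hul.ne' hwl.ne' a b hc.ne']
    refine hs hus hws (by positivity) (by positivity) ?_
    rw [← add_div, div_self hc.ne']

lemma convex_setOf_PNinv_mem {K : Set (E (d + 1))}
    (harc : ∀ u ∈ K, ∀ w ∈ K, arcPts u w ⊆ K) : Convex ℝ {y : E d | PNinv y ∈ K} := by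
  intro y hy z hz a b ha hb hab
  have hy0 : ‖homogenize y‖ ≠ 0 := norm_ne_zero_iff.2 (homogenize_ne_zero y)
  have hz0 : ‖homogenize z‖ ≠ 0 := norm_ne_zero_iff.2 (homogenize_ne_zero z)
  have hcomb : (a * ‖homogenize y‖) • PNinv y + (b * ‖homogenize z‖) • PNinv z =
      homogenize (a • y + b • z) := by
    rw [homogenize_add_smul hab, PNinv, PNinv, smul_smul, smul_smul, mul_assoc, mul_assoc,
      mul_inv_cancel₀ hy0, mul_inv_cancel₀ hz0, mul_one, mul_one]
  refine harc _ hy _ hz ⟨a * ‖homogenize y‖, b * ‖homogenize z‖, by positivity, by positivity, ?_⟩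
  rw [hcomb]
  exact ⟨homogenize_ne_zero _, rfl⟩

theorem sconv_eq_of_subset_northHemisphere {S : Set (E (d + 1))} (hS : S ⊆ northHemisphere d) :
    sconv S = {x ∈ northHemisphere d | PN x ∈ convexHull ℝ (PN '' S)} := by
  apply subset_antisymm
  · exact sInter_subset_of_mem ⟨isSphConvex_setOf_PN_mem (convex_convexHull ℝ _),
      fun x hx => hx.1.1, fun x hx => ⟨hS hx, subset_convexHull ℝ _ (mem_image_of_mem PN hx)⟩⟩
  · rintro u ⟨hu, hPNu⟩ K ⟨hK | ⟨-, harc⟩, -, hSK⟩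
    · exact hK ▸ hu.1
    · have hPNS : PN '' S ⊆ {y | PNinv y ∈ K} := by
        rintro _ ⟨x, hx, rfl⟩
        change PNinv (PN x) ∈ K
        rw [PNinv_PN (hS hx)]
        exact hSK hx
      simpa [PNinv_PN hu] using convexHull_min hPNS (convex_setOf_PNinv_mem harc) hPNu

theorem cap_subset_sconv_iff {S : Set (E (d + 1))} (hS : S ⊆ northHemisphere d) {θ : ℝ}
    (hθ0 : 0 ≤ θ) (hθ : θ < π / 2) :
    cap (eLast d) θ ⊆ sconv S ↔ Metric.closedBall 0 (tan θ) ⊆ convexHull ℝ (PN '' S) := by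
  rw [sconv_eq_of_subset_northHemisphere hS]
  constructor
  · intro h y hy
    rw [mem_closedBall_zero_iff, ← PN_PNinv y] at hy
    simpa [PN_PNinv] using
      (h ((mem_cap_eLast_iff hθ0 hθ).2 ⟨PNinv_mem_northHemisphere y, hy⟩)).2
  · intro h u hu
    obtain ⟨hN, hle⟩ := (mem_cap_eLast_iff hθ0 hθ).1 hu
    exact ⟨hN, h (mem_closedBall_zero_iff.2 hle)⟩

end SphericalHull

lemma tan_half_mul_le {r ρ : ℝ} (hr0 : 0 ≤ r) (hr1 : r ≤ 1) (hρ0 : 0 ≤ ρ) (hρ : ρ < π / 2) :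
    tan (r / 2 * ρ) ≤ r * tan ρ := by
  have hθ : r / 2 * ρ ≤ π / 3 := by nlinarith [mul_le_mul_of_nonneg_right hr1 hρ0, pi_pos]
  set θ := r / 2 * ρ
  have hθ0 : 0 ≤ θ := by positivity
  have hcos : 1 / 2 ≤ cos θ := by
    rw [← cos_pi_div_three]
    exact cos_le_cos_of_nonneg_of_le_pi hθ0 (by linarith [pi_pos]) hθ
  calc tan θ = sin θ / cos θ := tan_eq_sin_div_cos θ
    _ ≤ θ / (1 / 2) := div_le_div₀ hθ0 (sin_le hθ0) one_half_pos hcos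
    _ = r * ρ := by ring
    _ ≤ r * tan ρ := mul_le_mul_of_nonneg_left (le_tan hρ0 hρ) hr0

def EuclideanQST (d : ℕ) (r : ℝ) : Prop :=
  ∀ Q : Set (E d), Metric.closedBall 0 1 ⊆ convexHull ℝ Q →
    ∃ Q' : Finset (E d), ↑Q' ⊆ Q ∧ Q'.card ≤ 2 * d ∧
      Metric.closedBall 0 r ⊆ convexHull ℝ (Q' : Set (E d))

open scoped Pointwise in
lemma EuclideanQST.exists_of_closedBall_subset {d : ℕ} {r : ℝ} (h : EuclideanQST d r) {T : ℝ}
    (hT : 0 < T) {Q : Set (E d)} (hQ : Metric.closedBall 0 T ⊆ convexHull ℝ Q) :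
    ∃ Q' : Finset (E d), ↑Q' ⊆ Q ∧ Q'.card ≤ 2 * d ∧
      Metric.closedBall 0 (r * T) ⊆ convexHull ℝ (Q' : Set (E d)) := by
  classical
  have hT' : T ≠ 0 := hT.ne'
  have hunit : Metric.closedBall 0 1 ⊆ convexHull ℝ (T⁻¹ • Q) := by
    rwa [convexHull_smul, ← smul_set_subset_iff₀ hT', smul_closedBall' hT', smul_zero,
      Real.norm_of_nonneg hT.le, mul_one]
  obtain ⟨Q', hQ'Q, hcard, hball⟩ := h _ hunit
  refine ⟨Q'.image (T • ·), ?_, Finset.card_image_le.trans hcard, ?_⟩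
  · rwa [Finset.coe_image, Set.image_smul, smul_set_subset_iff₀ hT']
  · have hscale : T • Metric.closedBall (0 : E d) r = Metric.closedBall 0 (r * T) := by
      rw [smul_closedBall' hT', smul_zero, Real.norm_of_nonneg hT.le, mul_comm]
    rw [Finset.coe_image, Set.image_smul, convexHull_smul, ← hscale]
    exact Set.smul_set_mono hball

/-- Spherical QST for sets in the open northern hemisphere, from Euclidean QST. -/
theorem sphericalQST_north (d : ℕ) (r : ℝ) (hr : r ∈ Set.Ioc (0 : ℝ) 1)
    (QST : ∀ Q : Set (E d), Metric.closedBall 0 1 ⊆ convexHull ℝ Q →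
      ∃ Q' : Finset (E d), ↑Q' ⊆ Q ∧ Q'.card ≤ 2 * d ∧
        Metric.closedBall 0 r ⊆ convexHull ℝ (Q' : Set (E d)))
    (C : Set (E (d + 1))) (hC : C ⊆ {x ∈ unitSphere (d + 1) | 0 < x (Fin.last d)})
    (ρ : ℝ) (hρ : ρ ∈ Set.Ioo 0 (Real.pi / 2)) (hcap : cap (eLast d) ρ ⊆ sconv C) :
    ∃ C' : Finset (E (d + 1)), ↑C' ⊆ C ∧ C'.card ≤ 2 * d ∧
      cap (eLast d) (r / 2 * ρ) ⊆ sconv (C' : Set (E (d + 1))) := by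
  classical
  obtain ⟨hr0, hr1⟩ := hr
  obtain ⟨hρ0, hρ⟩ := hρ
  have hball := (cap_subset_sconv_iff hC hρ0.le hρ).1 hcap
  obtain ⟨Q, hQC, hcard, hQball⟩ := EuclideanQST.exists_of_closedBall_subset QST
    (tan_pos_of_pos_of_lt_pi_div_two hρ0 hρ) hball
  obtain ⟨C', hC'C, hinj, rfl⟩ := Finset.exists_subset_injOn_image_eq_of_surjOn C Q hQC
  refine ⟨C', hC'C, (Finset.card_image_of_injOn hinj).ge.trans hcard, ?_⟩
  have hθ : r / 2 * ρ < π / 2 := by nlinarith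
  rw [cap_subset_sconv_iff (hC'C.trans hC) (by positivity) hθ, ← Finset.coe_image]
  exact (Metric.closedBall_subset_closedBall (tan_half_mul_le hr0.le hr1 hρ0.le hρ)).trans hQball
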